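/- arXiv:2412.16683 — 2 statements merged into one kernel-verified Lean document; each statement's English description precedes it below -/
import Mathlib

section
/- Let $U: \mathbb{R} \to M_d(\mathbb{R})$ and $v: \mathbb{R} \to \mathbb{R}$ be differentiable and satisfy the gradient flow $\dot U = v\Lambda(-v\Gamma U + I)\Lambda$ and $\dot v = \mathrm{Tr}[\Lambda(-v\Gamma U + I)\Lambda U^\top]$, where $\Lambda, \Gamma$ are symmetric commuting matrices. Then for all $t$, $v(t)^2 - \mathrm{Tr}[U(t)U(t)^\top] = v(0)^2 - \mathrm{Tr}[U(0)U(0)^\top]$; that is, $v^2 - \mathrm{Tr}(UU^\top)$ is a conserved quantity of the flow. -/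
/-!
Write `A = Λ(-vΓU + I)Λ`, so that `U̇ = v A` and `v̇ = tr(A Uᵀ)`. Then
`d/dt v² = 2 v tr(A Uᵀ)` and `d/dt tr(U Uᵀ) = 2 tr(U̇ Uᵀ) = 2 v tr(A Uᵀ)`, so `v² - tr(U Uᵀ)`
has zero derivative everywhere and is constant.
-/

open Matrix

attribute [local instance] Matrix.normedAddCommGroup Matrix.normedSpace

variable {m n : Type*} [Fintype m] [Fintype n]

theorem Matrix.trace_mul_transpose_eq_sum {R : Type*} [NonUnitalNonAssocSemiring R]
    (A B : Matrix m n R) : (A * Bᵀ).trace = ∑ i, ∑ j, A i j * B i j := by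
  simp [trace, mul_apply]

theorem HasDerivAt.trace_mul_transpose_self {U : ℝ → Matrix m n ℝ} {U' : Matrix m n ℝ} {t : ℝ}
    (hU : HasDerivAt U U' t) :
    HasDerivAt (fun s => (U s * (U s)ᵀ).trace) (2 * (U' * (U t)ᵀ).trace) t := by
  have hentry (i : m) (j : n) : HasDerivAt (fun s => U s i j) (U' i j) t :=
    hasDerivAt_pi.1 (hasDerivAt_pi.1 hU i) j
  simp only [trace_mul_transpose_eq_sum, Finset.mul_sum]
  refine HasDerivAt.fun_sum fun i _ => HasDerivAt.fun_sum fun j _ => ?_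
  exact ((hentry i j).fun_mul (hentry i j)).congr_deriv (by ring)

theorem sq_sub_trace_mul_transpose_self_eq_of_hasDerivAt {U : ℝ → Matrix m n ℝ} {v : ℝ → ℝ}
    (A : ℝ → Matrix m n ℝ) (hU : ∀ t, HasDerivAt U (v t • A t) t)
    (hv : ∀ t, HasDerivAt v (A t * (U t)ᵀ).trace t) (t s : ℝ) :
    v t ^ 2 - (U t * (U t)ᵀ).trace = v s ^ 2 - (U s * (U s)ᵀ).trace := by
  have hderiv (r : ℝ) : HasDerivAt (fun r => v r ^ 2 - (U r * (U r)ᵀ).trace) 0 r := by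
    refine (((hv r).fun_pow 2).fun_sub (hU r).trace_mul_transpose_self).congr_deriv ?_
    simp only [smul_mul, trace_smul, smul_eq_mul]
    ring
  exact is_const_of_deriv_eq_zero (fun r => (hderiv r).differentiableAt)
    (fun r => (hderiv r).deriv) t s

theorem conserved_quantity_general (d : ℕ)
    (Λ Γ : Matrix (Fin d) (Fin d) ℝ)
    (U : ℝ → Matrix (Fin d) (Fin d) ℝ) (v : ℝ → ℝ)
    (hU : ∀ t, HasDerivAt U (v t • (Λ * (-(v t) • (Γ * U t) + 1) * Λ)) t)
    (hv : ∀ t, HasDerivAt v ((Λ * (-(v t) • (Γ * U t) + 1) * Λ * (U t)ᵀ).trace) t) :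
    ∀ t, (v t) ^ 2 - (U t * (U t)ᵀ).trace = (v 0) ^ 2 - (U 0 * (U 0)ᵀ).trace :=
  fun t => sq_sub_trace_mul_transpose_self_eq_of_hasDerivAt _ hU hv t 0

theorem conserved_quantity (d : ℕ)
    (Λ Γ : Matrix (Fin d) (Fin d) ℝ) (hΛ : Λ.IsSymm) (hΓ : Γ.IsSymm)
    (hcomm : Λ * Γ = Γ * Λ)
    (U : ℝ → Matrix (Fin d) (Fin d) ℝ) (v : ℝ → ℝ)
    (hU : ∀ t, HasDerivAt U (v t • (Λ * (-(v t) • (Γ * U t) + 1) * Λ)) t)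
    (hv : ∀ t, HasDerivAt v ((Λ * (-(v t) • (Γ * U t) + 1) * Λ * (U t)ᵀ).trace) t) :
    ∀ t, (v t) ^ 2 - (U t * (U t)ᵀ).trace = (v 0) ^ 2 - (U 0 * (U 0)ᵀ).trace :=
  conserved_quantity_general d Λ Γ U v hU hv
end

section
/- Let $(U(s), z(s), Z(s), v(s))$ be a differentiable solution of the system $\dot U = v - \alpha v^2 U - \delta z^2 U - \gamma vzZ$, $\dot z = Z - \alpha zZ^2 - \delta zU^2 - \gamma vZU$, $\dot Z = z - \alpha z^2 Z - \beta v^2 Z - \gamma vzU$, $\dot v = U - \alpha vU^2 - \beta vZ^2 - \gamma zZU$. Then the quantity $-U^2 + z^2 - Z^2 + v^2$ is constant along the solution. -/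
/-!
The form `κ = -U² + z² - Z² + v²` is preserved because the vector field is `κ`-orthogonal to the
position: `-U U' + z z' - Z Z' + v v'` vanishes identically. The linear part swaps `U ↔ v` and
`z ↔ Z`, which the signs of `κ` kill, and each cubic term appears twice with opposite signs.
-/

def kappa (U z Z v : ℝ) : ℝ := -U ^ 2 + z ^ 2 - Z ^ 2 + v ^ 2

theorem HasDerivAt.kappa {U z Z v : ℝ → ℝ} {U' z' Z' v' s : ℝ} (hU : HasDerivAt U U' s)
    (hz : HasDerivAt z z' s) (hZ : HasDerivAt Z Z' s) (hv : HasDerivAt v v' s) :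
    HasDerivAt (fun t => kappa (U t) (z t) (Z t) (v t))
      (2 * (-U s * U' + z s * z' - Z s * Z' + v s * v')) s := by
  refine ((((hU.pow 2).neg.add (hz.pow 2)).sub (hZ.pow 2)).add (hv.pow 2)).congr_deriv ?_
  ring

theorem kappa_polar_field_eq_zero (α β γ δ U z Z v : ℝ) :
    -U * (v - α * v ^ 2 * U - δ * z ^ 2 * U - γ * v * z * Z)
      + z * (Z - α * z * Z ^ 2 - δ * z * U ^ 2 - γ * v * Z * U)
      - Z * (z - α * z ^ 2 * Z - β * v ^ 2 * Z - γ * v * z * U)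
      + v * (U - α * v * U ^ 2 - β * v * Z ^ 2 - γ * z * Z * U) = 0 := by
  ring

theorem kappa_invariant (α β γ δ : ℝ) (U z Z v : ℝ → ℝ)
    (hU : ∀ s, HasDerivAt U (v s - α * (v s) ^ 2 * U s - δ * (z s) ^ 2 * U s - γ * v s * z s * Z s) s)
    (hz : ∀ s, HasDerivAt z (Z s - α * z s * (Z s) ^ 2 - δ * z s * (U s) ^ 2 - γ * v s * Z s * U s) s)
    (hZ : ∀ s, HasDerivAt Z (z s - α * (z s) ^ 2 * Z s - β * (v s) ^ 2 * Z s - γ * v s * z s * U s) s)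
    (hv : ∀ s, HasDerivAt v (U s - α * v s * (U s) ^ 2 - β * v s * (Z s) ^ 2 - γ * z s * Z s * U s) s) :
    ∀ s : ℝ, -(U s) ^ 2 + (z s) ^ 2 - (Z s) ^ 2 + (v s) ^ 2
      = -(U 0) ^ 2 + (z 0) ^ 2 - (Z 0) ^ 2 + (v 0) ^ 2 := by
  have hκ : ∀ s, HasDerivAt (fun t => kappa (U t) (z t) (Z t) (v t)) 0 s := fun s => by
    simpa only [kappa_polar_field_eq_zero, mul_zero] using (hU s).kappa (hz s) (hZ s) (hv s)
  exact fun s => is_const_of_deriv_eq_zero (fun t => (hκ t).differentiableAt)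
    (fun t => (hκ t).deriv) s 0
end
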